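/- Let σ_i ∈ S_n denote the transposition of i and i+1, and for a list (j_1,…,j_N) of indices in {1,…,n−1} set w_{(k)} := σ_{j_1}∘σ_{j_2}∘⋯∘σ_{j_k} for 0 ≤ k ≤ N (composition of functions, the rightmost factor applied first; w_{(0)} = id). (1) For the list i_0: for all 0 ≤ k ≤ N and 1 ≤ b ≤ n, the image set w_{(k)}({1,…,b}) is a set of consecutive integers. (2) For the list (i'_0)^{op} obtained by reversing i'_0: for all 0 ≤ k ≤ N and 1 ≤ b ≤ n, the image set w_{(k)}({1,…,b}) is of the form {1,…,a}, or {c,…,n}, or {1,…,a} ∪ {c,…,n} with a+1 < c. -/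

import Mathlib

/-- The reduced expression `i₀ = (1,2,…,n-1, 1,2,…,n-2, …, 1,2, 1)` for `w₀`. -/
def i0List (n : ℕ) : List ℕ :=
  ((List.range (n - 1)).map fun j => List.range' 1 (n - 1 - j)).foldr (· ++ ·) []

/-- The reduced expression `i₀' = (n-1,…,1, n-1,…,2, …, n-1,n-2, n-1)` for `w₀`. -/
def i0'List (n : ℕ) : List ℕ :=
  ((List.range (n - 1)).map fun j => (List.range' (1 + j) (n - 1 - j)).reverse).foldr (· ++ ·) []

/-- The adjacent transposition `σ_i` (swapping `i` and `i+1`), as a function on `ℕ`. -/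
def sigmaFun (i : ℕ) : ℕ → ℕ := fun k => if k = i then i + 1 else if k = i + 1 then i else k

/-- `σ_{j_1} ∘ σ_{j_2} ∘ ⋯ ∘ σ_{j_k}` (rightmost factor applied first). -/
def wordPerm (l : List ℕ) : ℕ → ℕ := l.foldr (fun i f => sigmaFun i ∘ f) id

/-!
Write `c_r := σ_1 ∘ ⋯ ∘ σ_r`, the cycle `1 ↦ 2 ↦ ⋯ ↦ r + 1 ↦ 1`. Peeling off the first block,
`i_0` for `n + 1` strands is `(1, …, n)` followed by `i_0` for `n` strands, so a prefix of it is
either some `c_k` or `c_n ∘ w` with `w` a prefix for `n` strands; `w` keeps `{1, …, n}` and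
`c_n` shifts it by one, so windows of consecutive values stay windows.

Reversed, `i'_0` for `n + 1` strands is the shifted copy (all letters `+ 1`) of the reversed
`i'_0` for `n` strands, followed by `(1, …, n)`. So a prefix is either the shift of a prefix
for `n` strands, which fixes `1` and acts on `{2, …, n + 1}` like the unshifted one, or
`w_0 ∘ c_r` with `w_0` acting as the reversal of `{2, …, n + 1}`. By induction every image
`w_{(k)}({1, …, b})` is `{1, …, n}` with an interval `{a, …, c}`, `a ≥ 1`, removed, and such
sets are exactly those of part (2).
-/

open Finset

lemma wordPerm_nil : wordPerm [] = id := rfl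

lemma wordPerm_cons (i : ℕ) (l : List ℕ) : wordPerm (i :: l) = sigmaFun i ∘ wordPerm l := rfl

lemma wordPerm_append (l₁ l₂ : List ℕ) : wordPerm (l₁ ++ l₂) = wordPerm l₁ ∘ wordPerm l₂ := by
  induction l₁ with
  | nil => rfl
  | cons i l ih => rw [List.cons_append, wordPerm_cons, wordPerm_cons, ih, Function.comp_assoc]

lemma sigmaFun_injective (i : ℕ) : Function.Injective (sigmaFun i) := by
  intro x y
  simp only [sigmaFun]
  split_ifs <;> omega

lemma wordPerm_injective (l : List ℕ) : Function.Injective (wordPerm l) := by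
  induction l with
  | nil => exact Function.injective_id
  | cons i l ih => exact (sigmaFun_injective i).comp ih

lemma wordPerm_zero {l : List ℕ} (h : 0 ∉ l) : wordPerm l 0 = 0 := by
  induction l with
  | nil => rfl
  | cons i l ih =>
    rw [List.mem_cons, not_or] at h
    rw [wordPerm_cons, Function.comp_apply, ih h.2, sigmaFun, if_neg h.1, if_neg (by omega)]

lemma wordPerm_map_succ (l : List ℕ) (x : ℕ) :
    wordPerm (l.map (· + 1)) (x + 1) = wordPerm l x + 1 := by
  induction l generalizing x with
  | nil => rfl
  | cons i l ih =>
    simp only [List.map_cons, wordPerm_cons, Function.comp_apply, ih, sigmaFun]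
    split_ifs <;> omega

lemma image_succ_image_wordPerm_map_succ (l : List ℕ) (s : Finset ℕ) :
    (s.image (· + 1)).image (wordPerm (l.map (· + 1))) = (s.image (wordPerm l)).image (· + 1) := by
  rw [image_image, image_image]
  exact congrArg (image · s) (funext (wordPerm_map_succ l))

lemma image_wordPerm_map_succ_Icc {l : List ℕ} (h : 0 ∉ l) (b : ℕ) :
    (Icc 1 (b + 1)).image (wordPerm (l.map (· + 1)))
      = insert 1 (((Icc 1 b).image (wordPerm l)).image (· + 1)) := by
  have hIcc : Icc 1 (b + 1) = insert (0 + 1) ((Icc 1 b).image (· + 1)) := by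
    ext x
    simp only [image_add_right_Icc, mem_insert, mem_Icc]
    omega
  rw [hIcc, image_insert, wordPerm_map_succ, wordPerm_zero h,
    image_succ_image_wordPerm_map_succ]

lemma image_wordPerm_Icc_of_forall_lt {l : List ℕ} {b : ℕ} (h : ∀ i ∈ l, 1 ≤ i ∧ i < b) :
    (Icc 1 b).image (wordPerm l) = Icc 1 b := by
  have hmaps : ∀ x ∈ Icc 1 b, wordPerm l x ∈ Icc 1 b := by
    induction l with
    | nil => exact fun x hx => hx
    | cons i l ih =>
      intro x hx
      have hi := h i List.mem_cons_self
      have hlx := mem_Icc.1 (ih (fun j hj => h j (List.mem_cons_of_mem i hj)) x hx)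
      rw [wordPerm_cons, Function.comp_apply, mem_Icc, sigmaFun]
      split_ifs <;> omega
  refine eq_of_subset_of_card_le (fun y hy => ?_)
    (card_image_of_injective _ (wordPerm_injective l)).ge
  obtain ⟨x, hx, rfl⟩ := mem_image.1 hy
  exact hmaps x hx

lemma wordPerm_range'_one (r x : ℕ) :
    wordPerm (List.range' 1 r) x = if 1 ≤ x ∧ x ≤ r then x + 1 else if x = r + 1 then 1 else x := by
  induction r generalizing x with
  | zero => simp only [List.range'_zero, wordPerm_nil, id]; split_ifs <;> omega
  | succ r ih =>
    rw [List.range'_concat, wordPerm_append, Function.comp_apply, ih]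
    simp only [wordPerm_cons, wordPerm_nil, Function.comp_apply, id, sigmaFun]
    split_ifs <;> omega

lemma image_wordPerm_range'_one_of_subset {s : Finset ℕ} {r : ℕ} (hs : s ⊆ Icc 1 r) :
    s.image (wordPerm (List.range' 1 r)) = s.image (· + 1) := by
  refine image_congr fun x hx => ?_
  have := mem_Icc.1 (hs hx)
  rw [wordPerm_range'_one, if_pos this]

lemma insert_one_image_succ_Icc_sdiff_Icc {n a c : ℕ} (ha : 1 ≤ a) :
    insert 1 ((Icc 1 n \ Icc a c).image (· + 1)) = Icc 1 (n + 1) \ Icc (a + 1) (c + 1) := by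
  rw [image_sdiff _ _ (add_left_injective 1), image_add_right_Icc, image_add_right_Icc]
  ext x
  simp only [mem_insert, mem_sdiff, mem_Icc]
  omega

lemma image_succ_Icc_sdiff_Icc_one (n c : ℕ) :
    (Icc 1 n \ Icc 1 c).image (· + 1) = Icc 1 (n + 1) \ Icc 1 (c + 1) := by
  rw [image_sdiff _ _ (add_left_injective 1), image_add_right_Icc, image_add_right_Icc]
  ext x
  simp only [mem_sdiff, mem_Icc]
  omega

lemma Icc_sdiff_Icc_eq_Icc_or_Icc_or_union {n a c : ℕ} (ha : 1 ≤ a) :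
    (∃ a', Icc 1 n \ Icc a c = Icc 1 a') ∨ (∃ c', Icc 1 n \ Icc a c = Icc c' n) ∨
      ∃ a' c', a' + 1 < c' ∧ Icc 1 n \ Icc a c = Icc 1 a' ∪ Icc c' n := by
  by_cases hca : c < a
  · exact Or.inl ⟨n, by ext x; simp only [mem_sdiff, mem_Icc]; omega⟩
  by_cases ha1 : a = 1
  · exact Or.inr (Or.inl ⟨c + 1, by ext x; simp only [mem_sdiff, mem_Icc]; omega⟩)
  by_cases hcn : n ≤ c
  · exact Or.inl ⟨min (a - 1) n, by ext x; simp only [mem_sdiff, mem_Icc, le_min_iff]; omega⟩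
  exact Or.inr (Or.inr ⟨a - 1, c + 1, by omega,
    by ext x; simp only [mem_sdiff, mem_union, mem_Icc]; omega⟩)

lemma i0List_one : i0List 1 = [] := rfl

lemma i0List_succ (m : ℕ) : i0List (m + 2) = List.range' 1 (m + 1) ++ i0List (m + 1) := by
  rw [i0List, i0List, show m + 2 - 1 = m + 1 from rfl, Nat.add_sub_cancel, List.range_succ_eq_map]
  simp only [List.map_cons, List.map_map, List.foldr_cons, Nat.sub_zero]
  congr 2
  exact List.map_congr_left fun j _ => by simp only [Function.comp_apply]; congr 1; omega

lemma forall_mem_i0List (n : ℕ) : ∀ i ∈ i0List n, 1 ≤ i ∧ i < n := by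
  intro i hi
  simp only [i0List, List.foldr_map, List.foldr_append_eq_append, List.append_nil,
    List.mem_flatten, List.mem_map, List.mem_range, exists_exists_and_eq_and,
    List.mem_range'_1] at hi
  omega

lemma image_wordPerm_i0List_take (m k : ℕ) {b : ℕ} (hb : b ≤ m + 1) :
    ∃ a, a + b ≤ m + 1 ∧
      (Icc 1 b).image (wordPerm ((i0List (m + 1)).take k)) = Icc (a + 1) (a + b) := by
  induction m generalizing k b with
  | zero =>
    exact ⟨0, by omega, by rw [i0List_one, List.take_nil, wordPerm_nil, image_id, zero_add, zero_add]⟩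
  | succ m ih =>
    rw [i0List_succ, List.take_append, List.length_range']
    rcases le_or_gt k (m + 1) with hk | hk
    · rw [List.take_range'_of_length_ge hk, Nat.sub_eq_zero_of_le hk, List.take_zero,
        List.append_nil]
      rcases le_or_gt b k with hbk | hbk
      · refine ⟨1, by omega, ?_⟩
        rw [image_wordPerm_range'_one_of_subset (Icc_subset_Icc_right hbk), image_add_right_Icc,
          add_comm b 1]
      · refine ⟨0, by omega, ?_⟩
        rw [zero_add, zero_add, image_wordPerm_Icc_of_forall_lt fun i hi => ?_]
        have := List.mem_range'_1.1 hi
        omega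
    · rw [List.take_range'_of_length_le hk.le, wordPerm_append, ← image_image]
      rcases le_or_gt b (m + 1) with hbm | hbm
      · obtain ⟨a, hab, himage⟩ := ih (k - (m + 1)) hbm
        refine ⟨a + 1, by omega, ?_⟩
        rw [himage, image_wordPerm_range'_one_of_subset (Icc_subset_Icc (by omega) hab),
          image_add_right_Icc, add_right_comm a 1 b]
      · refine ⟨0, by omega, ?_⟩
        rw [zero_add, zero_add, image_image, ← wordPerm_append,
          image_wordPerm_Icc_of_forall_lt fun i hi => ?_]
        rcases List.mem_append.1 hi with hi | hi
        · have := List.mem_range'_1.1 hi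
          omega
        · have := forall_mem_i0List (m + 1) i (List.take_subset _ _ hi)
          omega

lemma i0'List_one : i0'List 1 = [] := rfl

lemma reverse_i0'List_succ (m : ℕ) :
    (i0'List (m + 2)).reverse
      = (i0'List (m + 1)).reverse.map (· + 1) ++ List.range' 1 (m + 1) := by
  rw [i0'List, i0'List, show m + 2 - 1 = m + 1 from rfl, Nat.add_sub_cancel, List.range_succ_eq_map]
  simp only [List.map_cons, List.map_map, List.foldr_cons, Nat.sub_zero, Nat.add_zero,
    List.reverse_append, List.reverse_reverse, List.foldr_map, List.foldr_append_eq_append,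
    List.append_nil, List.map_reverse, List.map_flatten, List.map_map]
  congr 3
  refine List.map_congr_left fun j _ => ?_
  rw [Function.comp_apply, Function.comp_apply, List.map_reverse,
    show ((· + 1) : ℕ → ℕ) = (1 + ·) from funext fun x => Nat.add_comm x 1, List.map_add_range']
  congr 2 <;> omega

lemma not_zero_mem_reverse_i0'List (n : ℕ) : 0 ∉ (i0'List n).reverse := by
  intro h
  simp [i0'List, List.foldr_map] at h

lemma wordPerm_reverse_i0'List (m : ℕ) {x : ℕ} (hx₁ : 1 ≤ x) (hx₂ : x ≤ m + 1) :
    wordPerm (i0'List (m + 1)).reverse x = m + 2 - x := by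
  induction m generalizing x with
  | zero => rw [i0'List_one, show x = 1 by omega]; rfl
  | succ m ih =>
    rw [reverse_i0'List_succ, wordPerm_append, Function.comp_apply, wordPerm_range'_one]
    rcases le_or_gt x (m + 1) with hxm | hxm
    · rw [if_pos ⟨hx₁, hxm⟩, wordPerm_map_succ, ih hx₁ hxm]
      omega
    · rw [if_neg (by omega), if_pos (by omega), wordPerm_map_succ _ 0,
        wordPerm_zero (not_zero_mem_reverse_i0'List _)]
      omega

lemma image_wordPerm_reverse_i0'List (m : ℕ) {b : ℕ} (hb : b ≤ m + 1) :
    (Icc 1 b).image (wordPerm (i0'List (m + 1)).reverse) = Icc 1 (m + 1) \ Icc 1 (m + 1 - b) := by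
  rw [image_congr fun x hx => wordPerm_reverse_i0'List m (mem_Icc.1 hx).1 (by
    have := (mem_Icc.1 hx).2; omega)]
  ext y
  simp only [mem_image, mem_sdiff, mem_Icc]
  constructor
  · rintro ⟨x, hx, rfl⟩
    omega
  · intro hy
    exact ⟨m + 2 - y, by omega, by omega⟩

lemma image_wordPerm_reverse_i0'List_take (m k : ℕ) {b : ℕ} (hb : b ≤ m + 1) :
    ∃ a c, 1 ≤ a ∧ (Icc 1 b).image (wordPerm ((i0'List (m + 1)).reverse.take k))
      = Icc 1 (m + 1) \ Icc a c := by
  induction m generalizing k b with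
  | zero =>
    refine ⟨b + 1, 1, by omega, ?_⟩
    rw [i0'List_one, List.reverse_nil, List.take_nil, wordPerm_nil, image_id]
    ext x
    simp only [mem_sdiff, mem_Icc]
    omega
  | succ m ih =>
    rw [reverse_i0'List_succ, List.take_append, List.length_map]
    set L := (i0'List (m + 1)).reverse
    have hL : 0 ∉ L := not_zero_mem_reverse_i0'List _
    rcases le_or_gt k L.length with hk | hk
    · rw [Nat.sub_eq_zero_of_le hk, List.take_zero, List.append_nil, ← List.map_take]
      obtain _ | b := b
      · exact ⟨1, m + 2, le_rfl, by simp⟩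
      obtain ⟨a, c, ha, himage⟩ := ih k (b := b) (by omega)
      refine ⟨a + 1, c + 1, by omega, ?_⟩
      rw [image_wordPerm_map_succ_Icc (fun h => hL (List.take_subset _ _ h)), himage,
        insert_one_image_succ_Icc_sdiff_Icc ha]
    · rw [List.take_of_length_le (by rw [List.length_map]; omega), wordPerm_append, ← image_image]
      obtain ⟨r, hr, hprefix⟩ : ∃ r ≤ m + 1,
          (List.range' 1 (m + 1)).take (k - L.length) = List.range' 1 r := by
        rcases le_total (k - L.length) (m + 1) with h | h
        · exact ⟨_, h, List.take_range'_of_length_ge h⟩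
        · exact ⟨_, le_rfl, List.take_range'_of_length_le h⟩
      rw [hprefix]
      rcases le_or_gt b r with hbr | hbr
      · refine ⟨1, m + 2 - b, le_rfl, ?_⟩
        rw [image_wordPerm_range'_one_of_subset (Icc_subset_Icc_right hbr),
          image_succ_image_wordPerm_map_succ, image_wordPerm_reverse_i0'List m (by omega),
          image_succ_Icc_sdiff_Icc_one]
        congr 2
        omega
      · obtain _ | b := b
        · omega
        refine ⟨2, m + 2 - b, by omega, ?_⟩
        rw [image_wordPerm_Icc_of_forall_lt fun i hi => ?_]
        · rw [image_wordPerm_map_succ_Icc hL, image_wordPerm_reverse_i0'List m (by omega),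
            insert_one_image_succ_Icc_sdiff_Icc le_rfl]
          congr 2
          omega
        · have := List.mem_range'_1.1 hi
          omega

theorem stmt6_general (n : ℕ) :
    (∀ k ≤ n * (n - 1) / 2, ∀ b, 1 ≤ b → b ≤ n → ∃ a c, a ≤ c ∧
        Finset.image (wordPerm ((i0List n).take k)) (Finset.Icc 1 b) = Finset.Icc a c) ∧
    (∀ k ≤ n * (n - 1) / 2, ∀ b, 1 ≤ b → b ≤ n →
        (∃ a, Finset.image (wordPerm ((i0'List n).reverse.take k)) (Finset.Icc 1 b)
            = Finset.Icc 1 a) ∨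
        (∃ c, Finset.image (wordPerm ((i0'List n).reverse.take k)) (Finset.Icc 1 b)
            = Finset.Icc c n) ∨
        (∃ a c, a + 1 < c ∧
          Finset.image (wordPerm ((i0'List n).reverse.take k)) (Finset.Icc 1 b)
            = Finset.Icc 1 a ∪ Finset.Icc c n)) := by
  constructor
  · intro k _ b hb₁ hb₂
    obtain ⟨m, rfl⟩ : ∃ m, n = m + 1 := ⟨n - 1, by omega⟩
    obtain ⟨a, -, himage⟩ := image_wordPerm_i0List_take m k hb₂
    exact ⟨a + 1, a + b, by omega, himage⟩
  · intro k _ b hb₁ hb₂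
    obtain ⟨m, rfl⟩ : ∃ m, n = m + 1 := ⟨n - 1, by omega⟩
    obtain ⟨a, c, ha, himage⟩ := image_wordPerm_reverse_i0'List_take m k hb₂
    rw [himage]
    exact Icc_sdiff_Icc_eq_Icc_or_Icc_or_union ha

theorem stmt6 (n : ℕ) (hn : 2 ≤ n) :
    (∀ k ≤ n * (n - 1) / 2, ∀ b, 1 ≤ b → b ≤ n → ∃ a c, a ≤ c ∧
        Finset.image (wordPerm ((i0List n).take k)) (Finset.Icc 1 b) = Finset.Icc a c) ∧
    (∀ k ≤ n * (n - 1) / 2, ∀ b, 1 ≤ b → b ≤ n →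
        (∃ a, Finset.image (wordPerm ((i0'List n).reverse.take k)) (Finset.Icc 1 b)
            = Finset.Icc 1 a) ∨
        (∃ c, Finset.image (wordPerm ((i0'List n).reverse.take k)) (Finset.Icc 1 b)
            = Finset.Icc c n) ∨
        (∃ a c, a + 1 < c ∧
          Finset.image (wordPerm ((i0'List n).reverse.take k)) (Finset.Icc 1 b)
            = Finset.Icc 1 a ∪ Finset.Icc c n)) :=
  stmt6_general n
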